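/- Fix M > 0 and r > 0. Then the Newman–Penrose Ricci scalar Λ(ω) = −ω/2 + (ω/2)(1 + 4M/(ωr³))^{−1/2} + (M/r³)(1 + 4M/(ωr³))^{−3/2} + (5M²/(2ωr⁶))(1 + 4M/(ωr³))^{−3/2} tends to 0 as ω → ∞; i.e. in the large-ω limit the Ricci scalar Λ of the KS spacetime vanishes, as in the Schwarzschild case. -/

import Mathlib

open Filter

/-- The Newman–Penrose Ricci scalar `Λ` of the KS spacetime, as a function of
the Hořava parameter `ω`, for fixed mass `M` and radius `r`. -/
noncomputable def KSLambda (M r ω : ℝ) : ℝ :=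
  -ω / 2 + (ω / 2) * (1 + 4 * M / (ω * r ^ 3)) ^ (-(1 / 2 : ℝ))
    + (M / r ^ 3) * (1 + 4 * M / (ω * r ^ 3)) ^ (-(3 / 2 : ℝ))
    + (5 * M ^ 2 / (2 * ω * r ^ 6)) * (1 + 4 * M / (ω * r ^ 3)) ^ (-(3 / 2 : ℝ))

/-! Writing `a = 4M/r³`, the first two terms of `Λ` are `(ω/2)((1 + a/ω)^(-1/2) - 1)`: half a
difference quotient of `t ↦ (1 + a t)^(-1/2)` at `0` with step `1/ω`. They tend to half its
derivative, `-a/4 = -M/r³`, which cancels the limit `M/r³` of the third term, while the last term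
is `O(1/ω)`. -/

theorem hasDerivAt_one_add_mul_rpow_zero (a p : ℝ) :
    HasDerivAt (fun t : ℝ => (1 + a * t) ^ p) (p * a) 0 := by
  have hlin : HasDerivAt (fun t : ℝ => 1 + a * t) a 0 := by
    simpa using ((hasDerivAt_id (0 : ℝ)).const_mul a).const_add 1
  have hpow : HasDerivAt (fun y : ℝ => y ^ p) p (1 + a * 0) := by
    simpa using Real.hasDerivAt_rpow_const (x := 1) (p := p) (Or.inl one_ne_zero)
  simpa [Function.comp_def, mul_comm p a] using hpow.comp 0 hlin

theorem tendsto_mul_one_add_div_rpow_sub_one (a p : ℝ) :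
    Tendsto (fun x : ℝ => x * ((1 + a / x) ^ p - 1)) atTop (nhds (p * a)) := by
  have hslope := hasDerivAt_iff_tendsto_slope.mp (hasDerivAt_one_add_mul_rpow_zero a p)
  have hinv := tendsto_inv_atTop_nhdsGT_zero.mono_right (nhdsGT_le_nhdsNE (0 : ℝ))
  refine (hslope.comp hinv).congr fun x => ?_
  simp [slope, div_eq_mul_inv]

theorem tendsto_one_add_div_rpow (a p : ℝ) :
    Tendsto (fun x : ℝ => (1 + a / x) ^ p) atTop (nhds 1) := by
  have hbase : Tendsto (fun x : ℝ => 1 + a / x) atTop (nhds 1) := by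
    simpa using tendsto_const_nhds.add ((tendsto_const_nhds (x := a)).div_atTop tendsto_id)
  simpa using hbase.rpow_const (Or.inl one_ne_zero)

theorem KSLambda_eq_mul_rpow_sub_one_add (M r ω : ℝ) :
    KSLambda M r ω = 1 / 2 * (ω * ((1 + 4 * M / r ^ 3 / ω) ^ (-(1 / 2 : ℝ)) - 1))
      + (M / r ^ 3 + 5 * M ^ 2 / (2 * r ^ 6) * ω⁻¹) * (1 + 4 * M / r ^ 3 / ω) ^ (-(3 / 2 : ℝ)) := by
  rw [KSLambda, div_div, mul_comm (r ^ 3) ω]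
  ring

theorem ks_lambda_large_omega_general (M r : ℝ) :
    Tendsto (fun ω : ℝ => KSLambda M r ω) atTop (nhds 0) := by
  have hquot := (tendsto_mul_one_add_div_rpow_sub_one (4 * M / r ^ 3) (-(1 / 2))).const_mul (1 / 2)
  have hrest := (tendsto_const_nhds (x := M / r ^ 3)).add
    (tendsto_inv_atTop_zero.const_mul (5 * M ^ 2 / (2 * r ^ 6))) |>.mul
    (tendsto_one_add_div_rpow (4 * M / r ^ 3) (-(3 / 2)))
  convert hquot.add hrest using 1
  · exact funext fun ω => KSLambda_eq_mul_rpow_sub_one_add M r ω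
  · congr 1
    ring

/-- For fixed `M > 0` and `r > 0`, the NP Ricci scalar `Λ(ω)` of the KS
spacetime tends to `0` as `ω → ∞`, as in the Schwarzschild case. -/
theorem ks_lambda_large_omega (M r : ℝ) (hM : 0 < M) (hr : 0 < r) :
    Tendsto (fun ω : ℝ => KSLambda M r ω) atTop (nhds 0) :=
  ks_lambda_large_omega_general M r
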